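/- Let s ∈ Λ_λ(d,v) be such that b_i(s) : T_i → V_i is surjective, let V'_i be a complex vector space of dimension dim T_i − dim V_i, and let a'_i : V'_i → T_i be any linear map such that the sequence 0 → V'_i →^{a'_i} T_i →^{b_i(s)} V_i → 0 is exact. Then there exists a unique linear map b'_i : T_i → V'_i such that a'_i ∘ b'_i = a_i(s) ∘ b_i(s) − λ_i·Id_{T_i}. -/

import Mathlib

open scoped BigOperators

noncomputable section

structure QuiverShape (I Hh : Type) : Type where
  src : Hh → I
  tgt : Hh → I
  noloop : ∀ h, src h ≠ tgt h
  rev : Hh → Hh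
  rev_ne : ∀ h, rev h ≠ h
  rev_rev : ∀ h, rev (rev h) = h
  src_rev : ∀ h, src (rev h) = tgt h
  tgt_rev : ∀ h, tgt (rev h) = src h
  eps : Hh → ℂ
  eps_pm : ∀ h, eps h = 1 ∨ eps h = -1
  eps_rev : ∀ h, eps (rev h) = - eps h

namespace QuiverShape

variable {I Hh : Type}

/-- The representation space `S(d,v)`: a triple `(B, γ, δ)`. -/
abbrev Rep (Q : QuiverShape I Hh) (d v : I → ℕ) : Type :=
  ((h : Hh) → Matrix (Fin (v (Q.tgt h))) (Fin (v (Q.src h))) ℂ)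
  × ((i : I) → Matrix (Fin (v i)) (Fin (d i)) ℂ)
  × ((i : I) → Matrix (Fin (d i)) (Fin (v i)) ℂ)

/-- The group `G_v = ∏ᵢ GL(Vᵢ)`. -/
abbrev GV (v : I → ℕ) : Type := (i : I) → (Matrix (Fin (v i)) (Fin (v i)) ℂ)ˣ

/-- The action of `G_v` on `S(d,v)`. -/
def act (Q : QuiverShape I Hh) {d v : I → ℕ} (g : GV v) (s : Q.Rep d v) : Q.Rep d v :=
  ⟨fun h => ((g (Q.tgt h)).val * s.1 h) * ((g (Q.src h))⁻¹).val,
   fun i => (g i : Matrix _ _ ℂ) * s.2.1 i,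
   fun i => s.2.2 i * (((g i)⁻¹ : (Matrix _ _ ℂ)ˣ) : Matrix _ _ ℂ)⟩

/-- `B_{h̄}`, pulled back to a matrix `V_{h₁} → V_{h₀}` via the identities
`(h̄)₀ = h₁`, `(h̄)₁ = h₀`. -/
def Bbar (Q : QuiverShape I Hh) {d v : I → ℕ} (s : Q.Rep d v) (h : Hh) :
    Matrix (Fin (v (Q.src h))) (Fin (v (Q.tgt h))) ℂ :=
  Matrix.reindex (finCongr (congrArg v (Q.tgt_rev h))) (finCongr (congrArg v (Q.src_rev h)))
    (s.1 (Q.rev h))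

/-- The `i`-th component of the moment map:
`μᵢ(s) = ∑_{h : h₁ = i} ε(h) B_h B_{h̄} + γᵢ δᵢ`. -/
def mu (Q : QuiverShape I Hh) [Fintype Hh] [DecidableEq I] {d v : I → ℕ}
    (s : Q.Rep d v) (i : I) : Matrix (Fin (v i)) (Fin (v i)) ℂ :=
  (∑ h : {h : Hh // Q.tgt h = i},
      Q.eps h.1 • (Matrix.reindex (finCongr (congrArg v h.2)) (finCongr (congrArg v h.2))
        (s.1 h.1 * Q.Bbar s h.1)))
  + s.2.1 i * s.2.2 i

/-- `Λ_λ(d,v) = μ⁻¹(λ)`. -/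
def lamSet (Q : QuiverShape I Hh) [Fintype Hh] [DecidableEq I] (lam : I → ℂ) (d v : I → ℕ) :
    Set (Q.Rep d v) :=
  {s | ∀ i, Q.mu s i = lam i • (1 : Matrix (Fin (v i)) (Fin (v i)) ℂ)}

/-- Index type for the coordinates (matrix entries) of `S(d,v)`. -/
abbrev Coord (Q : QuiverShape I Hh) (d v : I → ℕ) : Type :=
  ((h : Hh) × (Fin (v (Q.tgt h)) × Fin (v (Q.src h))))
  ⊕ (((i : I) × (Fin (v i) × Fin (d i)))
  ⊕ ((i : I) × (Fin (d i) × Fin (v i))))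

/-- The coordinates of a point of `S(d,v)`. -/
def coords (Q : QuiverShape I Hh) {d v : I → ℕ} (s : Q.Rep d v) : Q.Coord d v → ℂ
  | Sum.inl ⟨h, rc⟩ => s.1 h rc.1 rc.2
  | Sum.inr (Sum.inl ⟨i, rc⟩) => s.2.1 i rc.1 rc.2
  | Sum.inr (Sum.inr ⟨i, rc⟩) => s.2.2 i rc.1 rc.2

/-- A function `S(d,v) → ℂ` is polynomial if it is given by a polynomial in the
matrix entries. -/
def IsPolyFun (Q : QuiverShape I Hh) {d v : I → ℕ} (f : Q.Rep d v → ℂ) : Prop :=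
  ∃ P : MvPolynomial (Q.Coord d v) ℂ, ∀ s, f s = MvPolynomial.eval (Q.coords s) P

/-- The character `χ_m(g) = ∏ᵢ det(gᵢ)^{mᵢ}`. -/
def chi [Fintype I] {v : I → ℕ} (m : I → ℤ) (g : GV v) : ℂ :=
  ∏ i, ((g i : Matrix (Fin (v i)) (Fin (v i)) ℂ).det) ^ (m i)

/-- `χ_m`-semistability. -/
def Semistable (Q : QuiverShape I Hh) [Fintype I] {d v : I → ℕ} (m : I → ℤ)
    (s : Q.Rep d v) : Prop :=
  ∃ n : ℕ, 0 < n ∧ ∃ f : Q.Rep d v → ℂ, Q.IsPolyFun f ∧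
      (∀ (g : GV v) (t : Q.Rep d v), f (Q.act g t) = (chi m g) ^ n * f t) ∧ f s ≠ 0

/-- `a_{ij}` = number of arrows from `i` to `j`. -/
def aCount (Q : QuiverShape I Hh) (i j : I) : ℕ :=
  Nat.card {h : Hh // Q.src h = i ∧ Q.tgt h = j}

/-- The generalized Cartan matrix `c_{ij} = 2δ_{ij} - a_{ij}`. -/
def cartan (Q : QuiverShape I Hh) [DecidableEq I] (i j : I) : ℤ :=
  2 * (if i = j then 1 else 0) - (Q.aCount i j : ℤ)

/-- `T_i = D_i ⊕ ⊕_{h : h₁ = i} V_{h₀}`. -/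
abbrev TSpace (Q : QuiverShape I Hh) (d v : I → ℕ) (i : I) : Type :=
  (Fin (d i) → ℂ) × ((h : {h : Hh // Q.tgt h = i}) → (Fin (v (Q.src h.1)) → ℂ))

/-- Transport between coordinate spaces of equal dimensions. -/
def vcast {m n : ℕ} (hmn : m = n) : (Fin m → ℂ) ≃ₗ[ℂ] (Fin n → ℂ) :=
  LinearEquiv.funCongrLeft ℂ ℂ (finCongr hmn.symm)

/-- `a_i(s) = (δ_i, (B_{h̄})_{h : h₁ = i}) : V_i → T_i`. -/
def aMap (Q : QuiverShape I Hh) [DecidableEq I] {d v : I → ℕ}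
    (s : Q.Rep d v) (i : I) : (Fin (v i) → ℂ) →ₗ[ℂ] Q.TSpace d v i :=
  LinearMap.prod (Matrix.mulVecLin (s.2.2 i))
    (LinearMap.pi fun h =>
      Matrix.mulVecLin (Q.Bbar s h.1) ∘ₗ (vcast (congrArg v h.2)).symm.toLinearMap)

/-- `b_i(s) = (γ_i, (ε(h) B_h)_{h : h₁ = i}) : T_i → V_i`. -/
def bMap (Q : QuiverShape I Hh) [Fintype Hh] [DecidableEq I] {d v : I → ℕ}
    (s : Q.Rep d v) (i : I) : Q.TSpace d v i →ₗ[ℂ] (Fin (v i) → ℂ) :=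
  (Matrix.mulVecLin (s.2.1 i)).comp (LinearMap.fst ℂ _ _) +
    ∑ h : {h : Hh // Q.tgt h = i},
      Q.eps h.1 •
        ((vcast (congrArg v h.2)).toLinearMap ∘ₗ Matrix.mulVecLin (s.1 h.1) ∘ₗ
          (LinearMap.proj h) ∘ₗ (LinearMap.snd ℂ _ _))

/-- The canonical identification `T_i(d,v') = T_i(d,v)` when `v'` agrees with `v`
away from `i` (and the graph has no loops). -/
def Tcast (Q : QuiverShape I Hh) {d v v' : I → ℕ} (i : I)
    (hv' : ∀ j, j ≠ i → v' j = v j) : Q.TSpace d v' i ≃ₗ[ℂ] Q.TSpace d v i :=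
  (LinearEquiv.refl ℂ (Fin (d i) → ℂ)).prodCongr
    (LinearEquiv.piCongrRight fun h =>
      vcast (hv' (Q.src h.1) (fun he => Q.noloop h.1 (he.trans h.2.symm))))

/-- Exactness of `0 → M₁ → M₂ → M₃ → 0`. -/
def ShortExact {M₁ M₂ M₃ : Type} [AddCommGroup M₁] [Module ℂ M₁] [AddCommGroup M₂]
    [Module ℂ M₂] [AddCommGroup M₃] [Module ℂ M₃]
    (f : M₁ →ₗ[ℂ] M₂) (g : M₂ →ₗ[ℂ] M₃) : Prop :=
  Function.Injective f ∧ Function.Surjective g ∧ LinearMap.range f = LinearMap.ker g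

/-- Conditions (1)–(5) defining `Z_i^λ(d,v)`. -/
def ZConds (Q : QuiverShape I Hh) [Fintype Hh] [DecidableEq I] {d v v' : I → ℕ} (i : I)
    (hv' : ∀ j, j ≠ i → v' j = v j) (lam : I → ℂ)
    (s : Q.Rep d v) (s' : Q.Rep d v') : Prop :=
  (∀ h (hs : Q.src h ≠ i) (ht : Q.tgt h ≠ i),
      s.1 h = Matrix.reindex (finCongr (hv' _ ht)) (finCongr (hv' _ hs)) (s'.1 h)) ∧
  (∀ j (hj : j ≠ i),
      s.2.1 j = Matrix.reindex (finCongr (hv' j hj)) (Equiv.refl _) (s'.2.1 j)) ∧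
  (∀ j (hj : j ≠ i),
      s.2.2 j = Matrix.reindex (Equiv.refl _) (finCongr (hv' j hj)) (s'.2.2 j)) ∧
  ShortExact ((Q.Tcast i hv').toLinearMap ∘ₗ Q.aMap s' i) (Q.bMap s i) ∧
  ((Q.Tcast i hv').toLinearMap ∘ₗ (Q.aMap s' i ∘ₗ Q.bMap s' i) ∘ₗ (Q.Tcast i hv').symm.toLinearMap
      = Q.aMap s i ∘ₗ Q.bMap s i - lam i • LinearMap.id)

/-- The variety `Z_i^λ(d,v)`: conditions (1)–(5) together with condition (6). -/
def ZRel (Q : QuiverShape I Hh) [Fintype Hh] [DecidableEq I] {d v v' : I → ℕ} (i : I)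
    (hv' : ∀ j, j ≠ i → v' j = v j) (lam lam' : I → ℂ)
    (s : Q.Rep d v) (s' : Q.Rep d v') : Prop :=
  Q.ZConds i hv' lam s s' ∧ s ∈ Q.lamSet lam d v ∧ s' ∈ Q.lamSet lam' d v'

end QuiverShape

end

/-! On `Λ_λ` the composite `b_i a_i` is `μ_i(s) = λ_i`, so `b_i ∘ (a_i b_i - λ_i) = 0`.
Hence `a_i b_i - λ_i` takes values in `ker b_i = im a'_i`, and since `a'_i` is injective it
factors through `a'_i` in exactly one way. -/

theorem LinearMap.existsUnique_comp_eq_of_range_le {R M N P : Type*} [Semiring R]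
    [AddCommMonoid M] [AddCommMonoid N] [AddCommMonoid P] [Module R M] [Module R N] [Module R P]
    {f : N →ₗ[R] M} (hf : Function.Injective f) {g : P →ₗ[R] M} (hg : range g ≤ range f) :
    ∃! g' : P →ₗ[R] N, f ∘ₗ g' = g := by
  let e := LinearEquiv.ofInjective f hf
  have hfactor : f ∘ₗ e.symm.toLinearMap ∘ₗ g.codRestrict (range f) (fun x => hg ⟨x, rfl⟩) = g :=
    ext fun x => congrArg Subtype.val (e.apply_symm_apply _)
  exact ⟨_, hfactor, fun g' hg' => (cancel_left hf).1 (hg'.trans hfactor.symm)⟩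

namespace QuiverShape

variable {I Hh : Type}

theorem mulVec_reindex_finCongr {m n : ℕ} (hmn : m = n) (M : Matrix (Fin m) (Fin m) ℂ)
    (x : Fin n → ℂ) :
    (Matrix.reindex (finCongr hmn) (finCongr hmn) M).mulVec x =
      vcast hmn (M.mulVec ((vcast hmn).symm x)) := by
  subst hmn
  rfl

theorem bMap_comp_aMap [DecidableEq I] [Fintype Hh] (Q : QuiverShape I Hh) {d v : I → ℕ}
    (s : Q.Rep d v) (i : I) : Q.bMap s i ∘ₗ Q.aMap s i = (Q.mu s i).mulVecLin := by
  refine LinearMap.ext fun x => ?_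
  simp only [bMap, aMap, mu, LinearMap.comp_apply, LinearMap.add_apply, LinearMap.sum_apply,
    LinearMap.smul_apply, LinearMap.prod_apply, Function.prod, LinearMap.fst_apply,
    LinearMap.snd_apply, LinearMap.proj_apply, LinearMap.pi_apply, Matrix.mulVecLin_apply,
    LinearEquiv.coe_coe, Matrix.add_mulVec, Matrix.sum_mulVec, Matrix.smul_mulVec,
    mulVec_reindex_finCongr, Matrix.mulVec_mulVec, add_comm]

theorem bMap_comp_aMap_of_mem_lamSet [DecidableEq I] [Fintype Hh] (Q : QuiverShape I Hh)
    {d v : I → ℕ} {lam : I → ℂ} {s : Q.Rep d v} (hs : s ∈ Q.lamSet lam d v) (i : I) :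
    Q.bMap s i ∘ₗ Q.aMap s i = lam i • LinearMap.id := by
  rw [bMap_comp_aMap, hs i]
  exact LinearMap.ext fun x => by simp

theorem bMap_comp_aMap_comp_bMap_sub [DecidableEq I] [Fintype Hh] (Q : QuiverShape I Hh)
    {d v : I → ℕ} {lam : I → ℂ} {s : Q.Rep d v} (hs : s ∈ Q.lamSet lam d v) (i : I) :
    Q.bMap s i ∘ₗ (Q.aMap s i ∘ₗ Q.bMap s i - lam i • LinearMap.id) = 0 := by
  rw [LinearMap.comp_sub, ← LinearMap.comp_assoc, bMap_comp_aMap_of_mem_lamSet Q hs,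
    LinearMap.smul_comp, LinearMap.comp_smul, LinearMap.id_comp, LinearMap.comp_id, sub_self]

end QuiverShape

theorem existsUnique_bMap'_general
    {I Hh : Type} [DecidableEq I] [Fintype Hh]
    (Q : QuiverShape I Hh) (d v : I → ℕ) (lam : I → ℂ) (i : I)
    (s : Q.Rep d v) (hs : s ∈ Q.lamSet lam d v)
    (n : ℕ)
    (a' : (Fin n → ℂ) →ₗ[ℂ] Q.TSpace d v i)
    (hex : QuiverShape.ShortExact a' (Q.bMap s i)) :
    ∃! b' : Q.TSpace d v i →ₗ[ℂ] (Fin n → ℂ),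
      a' ∘ₗ b' = Q.aMap s i ∘ₗ Q.bMap s i - lam i • LinearMap.id := by
  refine LinearMap.existsUnique_comp_eq_of_range_le hex.1 ?_
  rw [hex.2.2, LinearMap.range_le_ker_iff]
  exact Q.bMap_comp_aMap_comp_bMap_sub hs i

theorem existsUnique_bMap'
    {I Hh : Type} [Fintype I] [DecidableEq I] [Fintype Hh] [DecidableEq Hh]
    (Q : QuiverShape I Hh) (d v : I → ℕ) (lam : I → ℂ) (i : I)
    (s : Q.Rep d v) (hs : s ∈ Q.lamSet lam d v)
    (hb : Function.Surjective ⇑(Q.bMap s i))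
    (n : ℕ) (hn : n + v i = d i + ∑ h : {h : Hh // Q.tgt h = i}, v (Q.src h.1))
    (a' : (Fin n → ℂ) →ₗ[ℂ] Q.TSpace d v i)
    (hex : QuiverShape.ShortExact a' (Q.bMap s i)) :
    ∃! b' : Q.TSpace d v i →ₗ[ℂ] (Fin n → ℂ),
      a' ∘ₗ b' = Q.aMap s i ∘ₗ Q.bMap s i - lam i • LinearMap.id :=
  existsUnique_bMap'_general Q d v lam i s hs n a' hex
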